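/- arXiv:2503.21873 — 6 statements merged into one kernel-verified Lean document; each statement's English description precedes it below -/
import Mathlib

section
/- Suppose M has dimension n (it is modelled on ℝ^n) and E has rank r. Then there exist open sets U_0, U_1, …, U_n covering M and, for each k ∈ {0,…,n}, smooth local sections s^{(k)}_1, …, s^{(k)}_r of E over U_k whose values s^{(k)}_1(x), …, s^{(k)}_r(x) form a basis of the fiber E_x for every x ∈ U_k. In other words, E admits local frames over a trivializing open cover consisting of n+1 open sets. -/
open Bundle Function Set
open scoped Manifold

noncomputable section

section DimensionTheory

open Topology

variable {X : Type*} [TopologicalSpace X]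

/-- `C` is a relatively clopen subset of `A` (clopen in the subspace topology). -/
def IsRelClopen (A C : Set X) : Prop :=
  C ⊆ A ∧ (∃ O, IsOpen O ∧ C = A ∩ O) ∧ closure C ∩ A ⊆ C

namespace IsRelClopen

theorem subset {A C : Set X} (h : IsRelClopen A C) : C ⊆ A := h.1

theorem relOpen {A C : Set X} (h : IsRelClopen A C) : ∃ O, IsOpen O ∧ C = A ∩ O := h.2.1

theorem relClosed {A C : Set X} (h : IsRelClopen A C) : closure C ∩ A ⊆ C := h.2.2

theorem empty (A : Set X) : IsRelClopen A (∅ : Set X) :=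
  ⟨empty_subset _, ⟨∅, isOpen_empty, by simp⟩, by simp⟩

theorem union {A C D : Set X} (hC : IsRelClopen A C) (hD : IsRelClopen A D) :
    IsRelClopen A (C ∪ D) := by
  obtain ⟨O, hO, rfl⟩ := hC.relOpen
  obtain ⟨O', hO', rfl⟩ := hD.relOpen
  refine ⟨union_subset inter_subset_left inter_subset_left,
    ⟨O ∪ O', hO.union hO', by rw [inter_union_distrib_left]⟩, ?_⟩
  rw [closure_union]
  rintro x ⟨hx1 | hx1, hx2⟩
  · exact Or.inl (hC.relClosed ⟨hx1, hx2⟩)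
  · exact Or.inr (hD.relClosed ⟨hx1, hx2⟩)

theorem diff {A C D : Set X} (hC : IsRelClopen A C) (hD : IsRelClopen A D) :
    IsRelClopen A (C \ D) := by
  obtain ⟨O, hO, hCO⟩ := hC.relOpen
  refine ⟨fun x hx => hC.subset hx.1, ⟨O ∩ (closure D)ᶜ, hO.inter (isClosed_closure.isOpen_compl), ?_⟩, ?_⟩
  · ext x
    constructor
    · rintro ⟨hxC, hxD⟩
      refine ⟨hC.subset hxC, (hCO ▸ hxC).2, fun hcl => hxD (hD.relClosed ⟨hcl, hC.subset hxC⟩)⟩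
    · rintro ⟨hxA, hxO, hxcl⟩
      exact ⟨hCO ▸ ⟨hxA, hxO⟩, fun hxD => hxcl (subset_closure hxD)⟩
  · rintro x ⟨hxcl, hxA⟩
    have hxC : x ∈ C := hC.relClosed ⟨closure_mono diff_subset hxcl, hxA⟩
    refine ⟨hxC, fun hxD => ?_⟩
    obtain ⟨O', hO', hDO⟩ := hD.relOpen
    have hxO' : x ∈ O' := (hDO ▸ hxD).2
    obtain ⟨y, hy⟩ := mem_closure_iff.1 hxcl O' hO' hxO'
    exact hy.2.2 (hDO ▸ ⟨hC.subset hy.2.1, hy.1⟩)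

theorem biUnion_finset {ι : Type*} {A : Set X} {C : ι → Set X} (S : Finset ι)
    (h : ∀ t ∈ S, IsRelClopen A (C t)) : IsRelClopen A (⋃ t ∈ S, C t) := by
  classical
  induction S using Finset.induction with
  | empty => simpa using IsRelClopen.empty A
  | @insert a s hx ih =>
    rw [Finset.set_biUnion_insert]
    exact (h a (Finset.mem_insert_self a s)).union
      (ih fun t ht => h t (Finset.mem_insert_of_mem ht))

/-- A union of any subfamily of a relatively clopen partition of `A` is relatively clopen. -/
theorem iUnion_of_partition {ι : Type*} {A : Set X} {C : ι → Set X}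
    (h : ∀ t, IsRelClopen A (C t)) (hdisj : Pairwise (Disjoint on C))
    (hcov : A ⊆ ⋃ t, C t) (T : Set ι) : IsRelClopen A (⋃ t ∈ T, C t) := by
  refine ⟨iUnion₂_subset fun t _ => (h t).subset, ?_, ?_⟩
  · choose O hO hCO using fun t => (h t).relOpen
    exact ⟨⋃ t ∈ T, O t, isOpen_biUnion fun t _ => hO t, by
      rw [inter_iUnion₂]; exact iUnion₂_congr fun t _ => hCO t⟩
  · rintro x ⟨hxcl, hxA⟩
    obtain ⟨t₀, hxt₀⟩ := mem_iUnion.1 (hcov hxA)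
    by_cases ht₀ : t₀ ∈ T
    · exact mem_biUnion ht₀ hxt₀
    · exfalso
      obtain ⟨O, hO, hCO⟩ := (h t₀).relOpen
      have hxO : x ∈ O := (hCO ▸ hxt₀).2
      obtain ⟨y, hy⟩ := mem_closure_iff.1 hxcl O hO hxO
      obtain ⟨t, htT, hyt⟩ := mem_iUnion₂.1 hy.2
      have hyt₀ : y ∈ C t₀ := hCO ▸ ⟨(h t).subset hyt, hy.1⟩
      have : t ≠ t₀ := fun h => ht₀ (h ▸ htT)
      exact (hdisj this).le_bot ⟨hyt, hyt₀⟩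

end IsRelClopen

/-- `A` has a basis of relatively clopen neighborhoods. -/
def HasRelClopenBasis (A : Set X) : Prop :=
  ∀ x ∈ A, ∀ U : Set X, IsOpen U → x ∈ U → ∃ C, IsRelClopen A C ∧ x ∈ C ∧ C ⊆ U

theorem exists_relClopen_partition {ι : Type*} [Encodable ι] {A : Set X} {C : ι → Set X}
    (h : ∀ t, IsRelClopen A (C t)) (hcov : A ⊆ ⋃ t, C t) :
    ∃ D : ι → Set X, (∀ t, IsRelClopen A (D t)) ∧ Pairwise (Disjoint on D) ∧
      A ⊆ ⋃ t, D t ∧ ∀ t, D t ⊆ C t := by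
  classical
  set S : ι → Finset ι := fun t =>
    (Finset.range (Encodable.encode t)).filterMap (fun m => Encodable.decode₂ ι m)
      (fun a a' b hb hb' => by
        simp only [Encodable.mem_decode₂] at hb hb'; omega) with hS
  have hmemS : ∀ s t : ι, s ∈ S t ↔ Encodable.encode s < Encodable.encode t := by
    intro s t
    simp only [hS, Finset.mem_filterMap, Finset.mem_range, Encodable.decode₂_eq_some]
    constructor
    · rintro ⟨m, hm, rfl⟩; exact hm
    · exact fun h => ⟨Encodable.encode s, h, rfl⟩
  refine ⟨fun t => C t \ ⋃ s ∈ S t, C s, fun t =>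
    (h t).diff (IsRelClopen.biUnion_finset _ fun s _ => h s), ?_, ?_, fun t => diff_subset⟩
  · intro s t hst
    rcases lt_or_gt_of_ne (fun he => hst (Encodable.encode_injective he)) with hlt | hlt
    · refine Set.disjoint_left.2 fun a ha ha' => ?_
      exact ha'.2 (mem_biUnion ((hmemS s t).2 hlt) ha.1)
    · refine Set.disjoint_left.2 fun a ha ha' => ?_
      exact ha.2 (mem_biUnion ((hmemS t s).2 hlt) ha'.1)
  · intro a haA
    have hne : ∃ m, ∃ s : ι, Encodable.encode s = m ∧ a ∈ C s := by
      obtain ⟨s, hs⟩ := mem_iUnion.1 (hcov haA)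
      exact ⟨Encodable.encode s, s, rfl, hs⟩
    obtain ⟨s₀, hs₀, has₀⟩ := Nat.find_spec hne
    refine mem_iUnion.2 ⟨s₀, has₀, fun hmem => ?_⟩
    obtain ⟨s, hsS, has⟩ := mem_iUnion₂.1 hmem
    have : Encodable.encode s < Encodable.encode s₀ := (hmemS s s₀).1 hsS
    exact absurd (Nat.find_min hne (hs₀ ▸ this) ⟨s, rfl, has⟩) (fun h => h)

/-- Separation by a relatively clopen set, given a relatively clopen basis. -/
theorem HasRelClopenBasis.separation [SecondCountableTopology X]
    {A : Set X} (hA : HasRelClopenBasis A) {B₁ B₂ : Set X} (h1 : B₁ ⊆ A) (h2 : B₂ ⊆ A)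
    (hc1 : closure B₁ ∩ A ⊆ B₁) (hc2 : closure B₂ ∩ A ⊆ B₂) (hd : Disjoint B₁ B₂) :
    ∃ C, IsRelClopen A C ∧ B₁ ⊆ C ∧ C ∩ B₂ = ∅ := by
  classical
  -- for each point of `A`, a relatively clopen neighborhood missing `closure B₁` or `closure B₂`
  have key : ∀ x : A, ∃ C, IsRelClopen A C ∧ (x : X) ∈ C ∧
      (C ∩ closure B₁ = ∅ ∨ C ∩ closure B₂ = ∅) := by
    rintro ⟨x, hxA⟩
    have : x ∉ closure B₁ ∨ x ∉ closure B₂ := by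
      by_contra hcon
      push_neg at hcon
      exact hd.le_bot ⟨hc1 ⟨hcon.1, hxA⟩, hc2 ⟨hcon.2, hxA⟩⟩
    rcases this with hx | hx
    · obtain ⟨C, hC, hxC, hCsub⟩ := hA x hxA (closure B₁)ᶜ isClosed_closure.isOpen_compl hx
      exact ⟨C, hC, hxC, Or.inl (by rw [eq_empty_iff_forall_notMem]; exact fun y hy => hCsub hy.1 hy.2)⟩
    · obtain ⟨C, hC, hxC, hCsub⟩ := hA x hxA (closure B₂)ᶜ isClosed_closure.isOpen_compl hx
      exact ⟨C, hC, hxC, Or.inr (by rw [eq_empty_iff_forall_notMem]; exact fun y hy => hCsub hy.1 hy.2)⟩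
  choose C hC hxC htag using key
  choose O hO hCO using fun x => (hC x).relOpen
  -- countable subcover
  obtain ⟨T, hTc, hTU⟩ := TopologicalSpace.isOpen_iUnion_countable O hO
  haveI : Encodable T := hTc.toEncodable
  have hcov : A ⊆ ⋃ t : T, C (t : A) := by
    intro a haA
    have ha1 : a ∈ ⋃ x : A, O x := by
      refine mem_iUnion.2 ⟨⟨a, haA⟩, ?_⟩
      have := hxC ⟨a, haA⟩
      rw [hCO ⟨a, haA⟩] at this
      exact this.2
    rw [← hTU] at ha1
    obtain ⟨t, htT, hat⟩ := mem_iUnion₂.1 ha1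
    refine mem_iUnion.2 ⟨⟨t, htT⟩, ?_⟩
    rw [hCO t]
    exact ⟨haA, hat⟩
  obtain ⟨D, hD, hDdisj, hDcov, hDsub⟩ :=
    exists_relClopen_partition (fun t : T => hC (t : A)) hcov
  refine ⟨⋃ t ∈ {t : T | C (t : A) ∩ closure B₂ = ∅}, D t,
    IsRelClopen.iUnion_of_partition hD hDdisj hDcov _, ?_, ?_⟩
  · intro a haB₁
    obtain ⟨t, hat⟩ := mem_iUnion.1 (hDcov (h1 haB₁))
    refine mem_biUnion ?_ hat
    rcases htag (t : A) with htag1 | htag2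
    · exact absurd (eq_empty_iff_forall_notMem.1 htag1 a
        ⟨hDsub t hat, subset_closure haB₁⟩) (fun h => h)
    · exact htag2
  · rw [eq_empty_iff_forall_notMem]
    rintro a ⟨hamem, haB₂⟩
    obtain ⟨t, htgood, hat⟩ := mem_iUnion₂.1 hamem
    exact eq_empty_iff_forall_notMem.1 htgood a ⟨hDsub t hat, subset_closure haB₂⟩

theorem clopen_separation_of_countable_closed_cover [NormalSpace X]
    {F : ℕ → Set X} (hFc : ∀ j, IsClosed (F j)) (hFU : (⋃ j, F j) = univ)
    (hsep : ∀ j, ∀ B₁ B₂ : Set X, B₁ ⊆ F j → B₂ ⊆ F j → closure B₁ ∩ F j ⊆ B₁ →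
      closure B₂ ∩ F j ⊆ B₂ → Disjoint B₁ B₂ →
      ∃ C, IsRelClopen (F j) C ∧ B₁ ⊆ C ∧ C ∩ B₂ = ∅)
    {A₁ A₂ : Set X} (h1 : IsClosed A₁) (h2 : IsClosed A₂) (hd : Disjoint A₁ A₂) :
    ∃ C, IsClopen C ∧ A₁ ⊆ C ∧ C ∩ A₂ = ∅ := by
  classical
  set Inv : Set X × Set X → Prop := fun p =>
    IsOpen p.1 ∧ IsOpen p.2 ∧ A₁ ⊆ p.1 ∧ A₂ ⊆ p.2 ∧ Disjoint (closure p.1) (closure p.2)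
    with hInv
  have expand : ∀ K₁ K₂ : Set X, IsClosed K₁ → IsClosed K₂ → Disjoint K₁ K₂ →
      ∃ U V : Set X, IsOpen U ∧ IsOpen V ∧ K₁ ⊆ U ∧ K₂ ⊆ V ∧
        Disjoint (closure U) (closure V) := by
    intro K₁ K₂ hK₁ hK₂ hK
    obtain ⟨U, hU, hKU, hclU⟩ := normal_exists_closure_subset hK₁ hK₂.isOpen_compl
      (disjoint_left.1 hK)
    obtain ⟨V, hV, hKV, hclV⟩ := normal_exists_closure_subset hK₂
      isClosed_closure.isOpen_compl (fun x hx hx' => (hclU hx') hx)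
    exact ⟨U, V, hU, hV, hKU, hKV, disjoint_left.2 fun x hx hx' => hclV hx' hx⟩
  have step : ∀ j : ℕ, ∀ p : Set X × Set X, Inv p →
      ∃ q : Set X × Set X, Inv q ∧ p.1 ⊆ q.1 ∧ p.2 ⊆ q.2 ∧ F j ⊆ q.1 ∪ q.2 := by
    rintro j ⟨U, V⟩ ⟨hU, hV, hAU, hAV, hUV⟩
    obtain ⟨C, hC, hB₁C, hCB₂⟩ := hsep j (F j ∩ closure U) (F j ∩ closure V)
      inter_subset_left inter_subset_left
      (fun x hx => ⟨hx.2, closure_minimal inter_subset_right isClosed_closure hx.1⟩)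
      (fun x hx => ⟨hx.2, closure_minimal inter_subset_right isClosed_closure hx.1⟩)
      (hUV.mono inter_subset_right inter_subset_right)
    have hCclosed : IsClosed C := by
      refine isClosed_of_closure_subset fun x hx => ?_
      exact hC.relClosed ⟨hx, (hFc j).closure_subset_iff.2 hC.subset hx⟩
    obtain ⟨O, hO, hCO⟩ := hC.relOpen
    have hK₂closed : IsClosed (F j \ C) := by
      have : F j \ C = F j ∩ Oᶜ := by
        rw [hCO]; ext x; simp only [mem_diff, mem_inter_iff, mem_compl_iff]; tauto
      rw [this]
      exact (hFc j).inter hO.isClosed_compl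
    have hdisj' : Disjoint (closure U ∪ C) (closure V ∪ (F j \ C)) := by
      rw [disjoint_union_left]
      constructor
      · rw [disjoint_union_right]
        exact ⟨hUV, disjoint_left.2 fun x hx hx' => hx'.2 (hB₁C ⟨hx'.1, hx⟩)⟩
      · rw [disjoint_union_right]
        refine ⟨disjoint_left.2 fun x hx hx' => ?_, disjoint_left.2 fun x hx hx' => hx'.2 hx⟩
        exact (eq_empty_iff_forall_notMem.1 hCB₂) x ⟨hx, hC.subset hx, hx'⟩
    obtain ⟨U', V', hU', hV', hsubU', hsubV', hUV'⟩ := expand (closure U ∪ C)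
      (closure V ∪ (F j \ C)) (isClosed_closure.union hCclosed)
      (isClosed_closure.union hK₂closed) hdisj'
    refine ⟨(U', V'), ⟨hU', hV', hAU.trans (subset_closure.trans
      (subset_union_left.trans hsubU')), hAV.trans (subset_closure.trans
      (subset_union_left.trans hsubV')), hUV'⟩, ?_, ?_, ?_⟩
    · exact subset_closure.trans (subset_union_left.trans hsubU')
    · exact subset_closure.trans (subset_union_left.trans hsubV')
    · intro x hx
      by_cases hxC : x ∈ C
      · exact Or.inl (hsubU' (Or.inr hxC))
      · exact Or.inr (hsubV' (Or.inr ⟨hx, hxC⟩))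
  -- base pair
  obtain ⟨U₀, V₀, hU₀, hV₀, hsub₀U, hsub₀V, hUV₀⟩ := expand A₁ A₂ h1 h2 hd
  have hInv₀ : Inv (U₀, V₀) := ⟨hU₀, hV₀, hsub₀U, hsub₀V, hUV₀⟩
  choose! q hqInv hq1 hq2 hq3 using step
  set seq : ℕ → Set X × Set X := fun j => Nat.rec (U₀, V₀) q j with hseq
  have hseq0 : seq 0 = (U₀, V₀) := rfl
  have hseqS : ∀ j, seq (j + 1) = q j (seq j) := fun j => rfl
  have hInvseq : ∀ j, Inv (seq j) := by
    intro j
    induction j with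
    | zero => exact hInv₀
    | succ j ih => rw [hseqS]; exact hqInv j (seq j) ih
  have hmono1 : Monotone fun j => (seq j).1 := by
    apply monotone_nat_of_le_succ
    intro j
    rw [hseqS]
    exact hq1 j (seq j) (hInvseq j)
  have hmono2 : Monotone fun j => (seq j).2 := by
    apply monotone_nat_of_le_succ
    intro j
    rw [hseqS]
    exact hq2 j (seq j) (hInvseq j)
  have hcovF : ∀ j, F j ⊆ (seq (j+1)).1 ∪ (seq (j+1)).2 := by
    intro j
    rw [hseqS]
    exact hq3 j (seq j) (hInvseq j)
  set Uinf := ⋃ j, (seq j).1 with hUinf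
  set Vinf := ⋃ j, (seq j).2 with hVinf
  have hdisjUV : Disjoint Uinf Vinf := by
    rw [disjoint_left]
    rintro x hx hx'
    obtain ⟨i, hi⟩ := mem_iUnion.1 hx
    obtain ⟨j, hj⟩ := mem_iUnion.1 hx'
    have h1' : x ∈ (seq (max i j)).1 := hmono1 (le_max_left i j) hi
    have h2' : x ∈ (seq (max i j)).2 := hmono2 (le_max_right i j) hj
    exact ((hInvseq (max i j)).2.2.2.2).le_bot ⟨subset_closure h1', subset_closure h2'⟩
  have hcover : Uinf ∪ Vinf = univ := by
    rw [eq_univ_iff_forall]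
    intro x
    have : x ∈ ⋃ j, F j := hFU ▸ mem_univ x
    obtain ⟨j, hj⟩ := mem_iUnion.1 this
    rcases hcovF j hj with h | h
    · exact Or.inl (mem_iUnion.2 ⟨j+1, h⟩)
    · exact Or.inr (mem_iUnion.2 ⟨j+1, h⟩)
  refine ⟨Uinf, ⟨?_, isOpen_iUnion fun j => (hInvseq j).1⟩, ?_, ?_⟩
  · have : Uinfᶜ = Vinf := by
      ext x
      constructor
      · intro hx
        rcases (eq_univ_iff_forall.1 hcover) x with h | h
        · exact absurd h hx
        · exact h
      · intro hx hx'
        exact hdisjUV.le_bot ⟨hx', hx⟩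
    rw [← isOpen_compl_iff, this]
    exact isOpen_iUnion fun j => (hInvseq j).2.1
  · exact fun x hx => mem_iUnion.2 ⟨0, (hInvseq 0).2.2.1 hx⟩
  · rw [eq_empty_iff_forall_notMem]
    rintro x ⟨hxU, hxA₂⟩
    exact hdisjUV.le_bot ⟨hxU, mem_iUnion.2 ⟨0, (hInvseq 0).2.2.2.1 hxA₂⟩⟩

/-- Expansion of a "zero-dimensional modulo countably many nice closed pieces" subset `Z`
into a disjoint family of open sets refining a given neighborhood assignment. -/
theorem exists_disjoint_open_expansion {M : Type*} [MetricSpace M]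
    [SecondCountableTopology M] [Nonempty M]
    {Z : Set M} {R : ℕ → Set M}
    (hRZ : ∀ p, R p ⊆ Z) (hRcov : Z ⊆ ⋃ p, R p)
    (hRcl : ∀ p, closure (R p) ∩ Z ⊆ R p)
    (hRbasis : ∀ p, HasRelClopenBasis (R p))
    (O : M → Set M) (hO : ∀ x, IsOpen (O x)) (hxO : ∀ x, x ∈ O x) :
    ∃ W : ℕ → Set M, (∀ t, IsOpen (W t)) ∧ Pairwise (Disjoint on W) ∧
      Z ⊆ ⋃ t, W t ∧ ∀ t, ∃ z, W t ⊆ O z := by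
  classical
  rcases eq_empty_or_nonempty Z with rfl | ⟨z₀, hz₀⟩
  · exact ⟨fun _ => ∅, fun _ => isOpen_empty, fun _ _ _ => disjoint_bot_left,
      by simp, fun _ => ⟨Classical.arbitrary M, empty_subset _⟩⟩
  -- work in the subspace `Y = Z`
  set Y := Z
  -- the pieces, pulled back to the subtype
  set F : ℕ → Set Y := fun p => (Subtype.val : Y → M) ⁻¹' (R p) with hF
  have hFclosed : ∀ p, IsClosed (F p) := by
    intro p
    have : F p = (Subtype.val : Y → M) ⁻¹' (closure (R p)) := by
      apply Subset.antisymm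
      · exact fun y hy => subset_closure hy
      · exact fun y hy => hRcl p ⟨hy, y.2⟩
    rw [this]
    exact isClosed_closure.preimage continuous_subtype_val
  have hFU : (⋃ p, F p) = univ := by
    rw [eq_univ_iff_forall]
    intro y
    obtain ⟨p, hp⟩ := mem_iUnion.1 (hRcov y.2)
    exact mem_iUnion.2 ⟨p, hp⟩
  -- each piece has a relatively clopen basis inside `Y`
  have hFbasis : ∀ p, HasRelClopenBasis (F p) := by
    intro p y hyF U' hU' hyU'
    obtain ⟨O', hO', hO'eq⟩ := isOpen_induced_iff.1 hU'
    obtain ⟨C, hC, hyC, hCsub⟩ := hRbasis p y.1 hyF O' hO' (by rw [← hO'eq] at hyU'; exact hyU')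
    refine ⟨(Subtype.val : Y → M) ⁻¹' C, ⟨fun y' hy' => hC.subset hy', ?_, ?_⟩, hyC, ?_⟩
    · obtain ⟨O₂, hO₂, hCO₂⟩ := hC.relOpen
      exact ⟨Subtype.val ⁻¹' O₂, hO₂.preimage continuous_subtype_val, by rw [hCO₂]; rfl⟩
    · intro y' hy'
      have h1 : (y' : M) ∈ closure C :=
        (continuous_subtype_val.closure_preimage_subset C) hy'.1
      exact hC.relClosed ⟨h1, hy'.2⟩
    · rw [← hO'eq]
      exact fun y' hy' => hCsub hy'
  -- clopen neighborhood basis of `Y`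
  have hclopenbasis : ∀ y : Y, ∀ U' : Set Y, IsOpen U' → y ∈ U' →
      ∃ C : Set Y, IsClopen C ∧ y ∈ C ∧ C ⊆ U' := by
    intro y U' hU' hyU'
    obtain ⟨C, hC, hyC, hCU'⟩ := clopen_separation_of_countable_closed_cover
      hFclosed hFU
      (fun p B₁ B₂ h1 h2 hc1 hc2 hd => (hFbasis p).separation h1 h2 hc1 hc2 hd)
      (isClosed_singleton (x := y)) hU'.isClosed_compl
      (disjoint_left.2 fun x hx hx' => hx' (mem_singleton_iff.1 hx ▸ hyU'))
    refine ⟨C, hC, hyC (mem_singleton y), fun x hx => ?_⟩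
    by_contra hxU'
    exact (eq_empty_iff_forall_notMem.1 hCU') x ⟨hx, hxU'⟩
  -- choose clopen neighborhoods inside the trivializing sets
  have hCy : ∀ y : Y, ∃ C : Set Y, IsClopen C ∧ y ∈ C ∧
      C ⊆ Subtype.val ⁻¹' (O (y : M)) := by
    intro y
    exact hclopenbasis y (Subtype.val ⁻¹' (O (y : M)))
      ((hO _).preimage continuous_subtype_val) (hxO _)
  choose Cy hCyclopen hCymem hCysub using hCy
  obtain ⟨T, hTc, hTU⟩ := TopologicalSpace.isOpen_iUnion_countable Cy
    (fun y => (hCyclopen y).isOpen)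
  have hTne : T.Nonempty := by
    rcases eq_empty_or_nonempty T with rfl | h
    · exfalso
      have : (⟨z₀, hz₀⟩ : Y) ∈ ⋃ y, Cy y := mem_iUnion.2 ⟨_, hCymem ⟨z₀, hz₀⟩⟩
      rw [← hTU] at this
      simpa using this
    · exact h
  haveI : Countable ↥T := hTc.to_subtype
  haveI : Nonempty ↥T := hTne.to_subtype
  obtain ⟨g, hg⟩ := exists_surjective_nat ↥T
  -- disjointify
  set D : ℕ → Set Y := fun t => Cy (g t) \ ⋃ s ∈ Finset.range t, Cy (g s) with hD
  have hDclopen : ∀ t, IsClopen (D t) :=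
    fun t => (hCyclopen _).diff (isClopen_biUnion_finset fun s _ => hCyclopen _)
  have hDdisj : Pairwise (Disjoint on D) := by
    intro s t hst
    rcases lt_or_gt_of_ne hst with h | h
    · exact disjoint_left.2 fun a ha ha' =>
        ha'.2 (mem_biUnion (Finset.mem_range.2 h) ha.1)
    · exact disjoint_left.2 fun a ha ha' =>
        ha.2 (mem_biUnion (Finset.mem_range.2 h) ha'.1)
  have hDcov : ∀ y : Y, ∃ t, y ∈ D t := by
    intro y
    have hy : y ∈ ⋃ y', Cy y' := mem_iUnion.2 ⟨y, hCymem y⟩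
    rw [← hTU] at hy
    obtain ⟨y', hy'T, hyy'⟩ := mem_iUnion₂.1 hy
    have hex : ∃ t, y ∈ Cy (g t) := by
      obtain ⟨t, ht⟩ := hg ⟨y', hy'T⟩
      exact ⟨t, by rw [ht]; exact hyy'⟩
    refine ⟨Nat.find hex, Nat.find_spec hex, fun hmem => ?_⟩
    obtain ⟨s, hs, hys⟩ := mem_iUnion₂.1 hmem
    exact Nat.find_min hex (Finset.mem_range.1 hs) hys
  -- expand to open subsets of `M` via the metric
  set sD : ℕ → Set M := fun t => Subtype.val '' D t with hsD
  have hsDsubZ : ∀ t, sD t ⊆ Z := fun t => by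
    rintro x ⟨y, _, rfl⟩; exact y.2
  have hkey : ∀ t, ∀ x ∈ Z, x ∈ closure (Z \ sD t) → x ∈ Z \ sD t := by
    intro t x hxZ hxcl
    -- `Z \ sD t` is the image of the closed set `(D t)ᶜ`
    have himg : Z \ sD t = Subtype.val '' ((D t)ᶜ) := by
      ext x'
      constructor
      · rintro ⟨hx'Z, hx'⟩
        exact ⟨⟨x', hx'Z⟩, fun hmem => hx' ⟨⟨x', hx'Z⟩, hmem, rfl⟩, rfl⟩
      · rintro ⟨y, hy, rfl⟩
        refine ⟨y.2, fun hmem => ?_⟩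
        obtain ⟨y', hy', hyy'⟩ := hmem
        exact hy (by rwa [← Subtype.ext hyy'.symm] at hy')
      -- ...
    obtain ⟨Tc, hTcclosed, hTceq⟩ := isClosed_induced_iff.1 (hDclopen t).compl.isClosed
    have h1 : Z \ sD t ⊆ Tc := by
      rw [himg]
      rintro x' ⟨y, hy, rfl⟩
      have : y ∈ (D t)ᶜ := hy
      rw [← hTceq] at this
      exact this
    have hx'Tc : x ∈ Tc := hTcclosed.closure_subset_iff.2 h1 hxcl
    have : (⟨x, hxZ⟩ : Y) ∈ (D t)ᶜ := by rw [← hTceq]; exact hx'Tc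
    rw [himg]
    exact ⟨⟨x, hxZ⟩, this, rfl⟩
  refine ⟨fun t => O ((g t : Y) : M) ∩
      {x | EMetric.infEdist x (sD t) < EMetric.infEdist x (Z \ sD t)},
    fun t => (hO _).inter (isOpen_lt (EMetric.continuous_infEdist)
      (EMetric.continuous_infEdist)), ?_, ?_, fun t => ⟨_, inter_subset_left⟩⟩
  · intro s t hst
    refine disjoint_left.2 ?_
    rintro x ⟨_, hx1⟩ ⟨_, hx2⟩
    simp only [mem_setOf_eq] at hx1 hx2
    have hsub1 : sD t ⊆ Z \ sD s := fun x' hx' =>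
      ⟨hsDsubZ t hx', fun hx'' => by
        obtain ⟨y, hy, rfl⟩ := hx'
        obtain ⟨y', hy', hyy'⟩ := hx''
        exact ((hDdisj hst.symm).le_bot ⟨hy, by rwa [← Subtype.ext hyy'.symm] at hy'⟩)⟩
    have hsub2 : sD s ⊆ Z \ sD t := fun x' hx' =>
      ⟨hsDsubZ s hx', fun hx'' => by
        obtain ⟨y, hy, rfl⟩ := hx'
        obtain ⟨y', hy', hyy'⟩ := hx''
        exact ((hDdisj hst).le_bot ⟨hy, by rwa [← Subtype.ext hyy'.symm] at hy'⟩)⟩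
    have c1 : EMetric.infEdist x (Z \ sD s) ≤ EMetric.infEdist x (sD t) :=
      EMetric.infEdist_anti hsub1
    have c2 : EMetric.infEdist x (Z \ sD t) ≤ EMetric.infEdist x (sD s) :=
      EMetric.infEdist_anti hsub2
    exact absurd (hx1.trans_le (c1.trans (hx2.trans_le c2).le)) (lt_irrefl _)
  · intro z hzZ
    obtain ⟨t, hzt⟩ := hDcov ⟨z, hzZ⟩
    refine mem_iUnion.2 ⟨t, ?_, ?_⟩
    · have := hCysub (g t) (hzt.1)
      exact this
    · simp only [mem_setOf_eq]
      have h0 : EMetric.infEdist z (sD t) = 0 :=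
        EMetric.infEdist_zero_of_mem ⟨⟨z, hzZ⟩, hzt, rfl⟩
      rw [h0]
      rcases eq_or_ne (EMetric.infEdist z (Z \ sD t)) 0 with h | h
      · exfalso
        have hcl : z ∈ closure (Z \ sD t) := EMetric.mem_closure_iff_infEdist_zero.2 h
        obtain ⟨_, hznot⟩ := hkey t z hzZ hcl
        exact hznot ⟨⟨z, hzZ⟩, hzt, rfl⟩
      · exact pos_iff_ne_zero.2 h

/-- Sets on which, in a chart, a fixed collection of coordinates is constant rational and
the other coordinates are irrational, have a relatively clopen neighborhood basis. -/
theorem hasRelClopenBasis_of_exact_levels {n : ℕ} {M : Type*} [TopologicalSpace M]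
    (φ : OpenPartialHomeomorph M (EuclideanSpace ℝ (Fin n)))
    {R : Set M} (hRsource : R ⊆ φ.source)
    (S : Finset (Fin n)) (q : Fin n → ℚ)
    (hSlevel : ∀ x ∈ R, ∀ i ∈ S, φ x i = (q i : ℝ))
    (hSirr : ∀ x ∈ R, ∀ i, i ∉ S → Irrational (φ x i)) :
    HasRelClopenBasis R := by
  classical
  intro x hxR U hU hxU
  set y : EuclideanSpace ℝ (Fin n) := φ x with hy
  have hxsource : x ∈ φ.source := hRsource hxR
  have hG : IsOpen (φ.target ∩ φ.symm ⁻¹' U) :=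
    φ.symm.continuousOn.isOpen_inter_preimage φ.open_target hU
  have hyG : y ∈ φ.target ∩ φ.symm ⁻¹' U :=
    ⟨φ.map_source hxsource, by
      show φ.symm (φ x) ∈ U
      rw [φ.left_inv hxsource]; exact hxU⟩
  obtain ⟨ε, hε, hball⟩ := Metric.isOpen_iff.1 hG y hyG
  set δ : ℝ := ε / (2 * (n + 1)) with hδ
  have hδpos : 0 < δ := by positivity
  -- choose endpoints: irrational on `S`, rational off `S`
  have hendpoints : ∀ i : Fin n, ∃ a b : ℝ,
      y i - δ < a ∧ a < y i ∧ y i < b ∧ b < y i + δ ∧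
      (i ∈ S → Irrational a ∧ Irrational b) ∧
      (i ∉ S → (∃ qa : ℚ, (qa : ℝ) = a) ∧ ∃ qb : ℚ, (qb : ℝ) = b) := by
    intro i
    by_cases hiS : i ∈ S
    · obtain ⟨a, ha, ha1, ha2⟩ := exists_irrational_btwn (by linarith : y i - δ < y i)
      obtain ⟨b, hb, hb1, hb2⟩ := exists_irrational_btwn (by linarith : y i < y i + δ)
      exact ⟨a, b, ha1, ha2, hb1, hb2, fun _ => ⟨ha, hb⟩, fun h => absurd hiS h⟩
    · obtain ⟨a, ha1, ha2⟩ := exists_rat_btwn (by linarith : y i - δ < y i)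
      obtain ⟨b, hb1, hb2⟩ := exists_rat_btwn (by linarith : y i < y i + δ)
      exact ⟨a, b, ha1, ha2, hb1, hb2, fun h => absurd h hiS,
        fun _ => ⟨⟨a, rfl⟩, ⟨b, rfl⟩⟩⟩
  choose a b ha1 ha2 hb1 hb2 hirr hrat using hendpoints
  set B : Set (EuclideanSpace ℝ (Fin n)) := {y' | ∀ i, y' i ∈ Ioo (a i) (b i)} with hB
  have hBopen : IsOpen B := by
    have : B = ⋂ i, (fun y' : EuclideanSpace ℝ (Fin n) => y' i) ⁻¹' Ioo (a i) (b i) := by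
      ext y'; simp [hB, mem_iInter]
    rw [this]
    exact isOpen_iInter_of_finite fun i =>
      isOpen_Ioo.preimage (EuclideanSpace.proj i).continuous
  have hBball : B ⊆ Metric.ball y ε := by
    intro y' hy'
    have hcoord : ∀ i, dist (y' i) (y i) ≤ δ := by
      intro i
      have h1 := (hy' i).1
      have h2 := (hy' i).2
      rw [Real.dist_eq, abs_le]
      constructor <;> [linarith [ha1 i]; linarith [hb2 i]]
    have hdist : dist y' y ≤ Real.sqrt ((n : ℝ) * δ ^ 2) := by
      rw [EuclideanSpace.dist_eq]
      apply Real.sqrt_le_sqrt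
      calc ∑ i, dist (y' i) (y i) ^ 2 ≤ ∑ _i : Fin n, δ ^ 2 := by
            apply Finset.sum_le_sum
            intro i _
            exact pow_le_pow_left₀ dist_nonneg (hcoord i) 2
        _ = (n : ℝ) * δ ^ 2 := by simp [Finset.sum_const, nsmul_eq_mul]
    have hsq : (n : ℝ) * δ ^ 2 ≤ (ε / 2) ^ 2 := by
      have hn : (0:ℝ) ≤ (n : ℝ) := Nat.cast_nonneg n
      have hδle : δ ≤ ε / (2 * ((n : ℝ) + 1)) := le_of_eq hδ
      have h1 : (n : ℝ) * δ ^ 2 ≤ (n:ℝ) * (ε / (2 * ((n : ℝ) + 1))) ^ 2 := by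
        apply mul_le_mul_of_nonneg_left _ hn
        exact pow_le_pow_left₀ hδpos.le hδle 2
      refine h1.trans ?_
      rw [div_pow, div_pow, mul_div_assoc' (n:ℝ), div_le_div_iff₀ (by positivity) (by positivity)]
      nlinarith [sq_nonneg (ε : ℝ), hn, sq_nonneg ((n:ℝ)+1), sq_nonneg ((n:ℝ)*ε), sq_nonneg ε]
    have : dist y' y ≤ ε / 2 := by
      refine hdist.trans ?_
      rw [show (ε / 2) = Real.sqrt ((ε / 2) ^ 2) by
        rw [Real.sqrt_sq (by positivity)]]
      exact Real.sqrt_le_sqrt hsq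
    rw [Metric.mem_ball]
    linarith
  refine ⟨R ∩ (φ.source ∩ φ ⁻¹' B), ⟨inter_subset_left, ?_, ?_⟩, ?_, ?_⟩
  · exact ⟨φ.source ∩ φ ⁻¹' B,
      φ.continuousOn.isOpen_inter_preimage φ.open_source hBopen, rfl⟩
  · -- relatively closed
    rintro x' ⟨hx'cl, hx'R⟩
    have hx'source : x' ∈ φ.source := hRsource hx'R
    have hφcl : φ x' ∈ closure (φ '' (R ∩ (φ.source ∩ φ ⁻¹' B))) :=
      mem_closure_image (φ.continuousAt hx'source) hx'cl
    have himg : φ '' (R ∩ (φ.source ∩ φ ⁻¹' B)) ⊆ B := by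
      rintro _ ⟨z, hz, rfl⟩; exact hz.2.2
    have hIcc : ∀ i, φ x' i ∈ Icc (a i) (b i) := by
      intro i
      have hclosed : IsClosed {y' : EuclideanSpace ℝ (Fin n) | y' i ∈ Icc (a i) (b i)} :=
        (isClosed_Icc).preimage (EuclideanSpace.proj i).continuous
      have hsub : closure (φ '' (R ∩ (φ.source ∩ φ ⁻¹' B))) ⊆
          {y' : EuclideanSpace ℝ (Fin n) | y' i ∈ Icc (a i) (b i)} := by
        apply closure_minimal _ hclosed
        intro y' hy'
        have := himg hy' i
        exact ⟨this.1.le, this.2.le⟩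
      exact hsub hφcl
    refine ⟨hx'R, hx'source, fun i => ?_⟩
    rcases (hIcc i).1.eq_or_lt with heq | hlt
    · exfalso
      by_cases hiS : i ∈ S
      · exact ((hirr i hiS).1) ⟨q i, by rw [← hSlevel x' hx'R i hiS, ← heq]⟩
      · obtain ⟨⟨qa, hqa⟩, _⟩ := hrat i hiS
        exact (hSirr x' hx'R i hiS) ⟨qa, by rw [hqa, ← heq]⟩
    refine ⟨hlt, ?_⟩
    rcases (hIcc i).2.eq_or_lt with heq | hlt2
    · exfalso
      by_cases hiS : i ∈ S
      · exact ((hirr i hiS).2) ⟨q i, by rw [← hSlevel x' hx'R i hiS, heq]⟩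
      · obtain ⟨_, ⟨qb, hqb⟩⟩ := hrat i hiS
        exact (hSirr x' hx'R i hiS) ⟨qb, by rw [hqb, heq]⟩
    · exact hlt2
  · exact ⟨hxR, hxsource, fun i => ⟨ha2 i, hb1 i⟩⟩
  · rintro x' ⟨hx'R, hx'source, hx'B⟩
    have : φ x' ∈ φ.target ∩ φ.symm ⁻¹' U := hball (hBball hx'B)
    have h2 : φ.symm (φ x') ∈ U := this.2
    rwa [φ.left_inv hx'source] at h2

end DimensionTheory

/-- A smooth vector bundle of rank `r` over an `n`-dimensional manifold (Hausdorff,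
second countable, boundaryless, modelled on `ℝ^n`) admits local frames over a
trivializing open cover consisting of `n + 1` open sets: there are open sets
`U_0, …, U_n` covering `M` and, over each `U_k`, smooth local sections
`s_1, …, s_r` whose values form a basis of every fiber over `U_k`. -/
theorem exists_cover_card_dim_add_one_with_local_frames
    (n : ℕ) {M : Type} [TopologicalSpace M] [ChartedSpace (EuclideanSpace ℝ (Fin n)) M]
    [IsManifold (𝓡 n) (⊤ : ℕ∞) M] [T2Space M] [SecondCountableTopology M]
    {F : Type} [NormedAddCommGroup F] [NormedSpace ℝ F] [FiniteDimensional ℝ F]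
    {V : M → Type} [TopologicalSpace (TotalSpace F V)]
    [∀ x, AddCommGroup (V x)] [∀ x, Module ℝ (V x)] [∀ x, TopologicalSpace (V x)]
    [FiberBundle F V] [VectorBundle ℝ F V] [ContMDiffVectorBundle (⊤ : ℕ∞) F V (𝓡 n)]
    (r : ℕ) (hr : Module.finrank ℝ F = r) :
    ∃ U : Fin (n + 1) → Set M,
      (∀ k, IsOpen (U k)) ∧ (⋃ k, U k) = Set.univ ∧
      ∀ k, ∃ s : Fin r → ∀ x : M, V x,
        (∀ i, ContMDiffOn (𝓡 n) ((𝓡 n).prod 𝓘(ℝ, F)) (⊤ : ℕ∞)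
          (fun x => TotalSpace.mk' F x (s i x)) (U k)) ∧
        ∀ x ∈ U k, LinearIndependent ℝ (fun i => s i x) ∧
          Submodule.span ℝ (Set.range fun i => s i x) = ⊤ := by
  classical
  cases isEmpty_or_nonempty M with
  | inl hM =>
    refine ⟨fun _ => univ, fun _ => isOpen_univ, Set.iUnion_const univ, fun k =>
      ⟨fun i x => isEmptyElim x, fun i => ?_, fun x hx => isEmptyElim x⟩⟩
    intro x hx
    exact isEmptyElim x
  | inr hM =>
  haveI : LocallyCompactSpace M := ChartedSpace.locallyCompactSpace (EuclideanSpace ℝ (Fin n)) M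
  haveI : SigmaCompactSpace M := sigmaCompactSpace_of_locallyCompact_secondCountable
  haveI : TopologicalSpace.MetrizableSpace M := Manifold.metrizableSpace (𝓡 n) M
  letI : MetricSpace M := TopologicalSpace.metrizableSpaceMetric M
  -- trivializing chart neighborhoods
  set Wn : M → Set M := fun x =>
    (chartAt (EuclideanSpace ℝ (Fin n)) x).source ∩ (trivializationAt F V x).baseSet with hWn
  have hWopen : ∀ x, IsOpen (Wn x) := fun x =>
    (chartAt (EuclideanSpace ℝ (Fin n)) x).open_source.inter
      (trivializationAt F V x).open_baseSet
  have hWmem : ∀ x, x ∈ Wn x := fun x =>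
    ⟨mem_chart_source _ x, FiberBundle.mem_baseSet_trivializationAt' x⟩
  have hrad : ∀ x : M, ∃ ρ : ℝ, 0 < ρ ∧ Metric.closedBall x ρ ⊆ Wn x := by
    intro x
    obtain ⟨ρ, hρ, hsub⟩ :=
      Metric.nhds_basis_closedBall.mem_iff.1 ((hWopen x).mem_nhds (hWmem x))
    exact ⟨ρ, hρ, hsub⟩
  choose ρ hρpos hρsub using hrad
  obtain ⟨T, hTc, hTU⟩ := TopologicalSpace.isOpen_iUnion_countable
    (fun x : M => Metric.ball x (ρ x)) (fun x => Metric.isOpen_ball)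
  have hTne : T.Nonempty := by
    rcases eq_empty_or_nonempty T with rfl | h
    · exfalso
      obtain ⟨x⟩ := hM
      have hx : x ∈ ⋃ x' : M, Metric.ball x' (ρ x') :=
        mem_iUnion.2 ⟨x, Metric.mem_ball_self (hρpos x)⟩
      rw [← hTU] at hx
      simpa using hx
    · exact h
  haveI : Countable ↥T := hTc.to_subtype
  haveI : Nonempty ↥T := hTne.to_subtype
  obtain ⟨u, hu⟩ := exists_surjective_nat ↥T
  set ctr : ℕ → M := fun j => ((u j : M)) with hctr
  set Ej : ℕ → Set M := fun j => Metric.closedBall (ctr j) (ρ (ctr j)) with hEj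
  have hEclosed : ∀ j, IsClosed (Ej j) := fun j => Metric.isClosed_closedBall
  have hEsub : ∀ j, Ej j ⊆ Wn (ctr j) := fun j => hρsub (ctr j)
  have hEcov : ∀ x : M, ∃ j, x ∈ Ej j := by
    intro x
    have hx : x ∈ ⋃ x' : M, Metric.ball x' (ρ x') :=
      mem_iUnion.2 ⟨x, Metric.mem_ball_self (hρpos x)⟩
    rw [← hTU] at hx
    obtain ⟨x', hx'T, hxball⟩ := mem_iUnion₂.1 hx
    obtain ⟨j, hj⟩ := hu ⟨x', hx'T⟩
    refine ⟨j, ?_⟩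
    have hcj : ctr j = x' := by show ((u j : M)) = x'; rw [hj]
    have : x ∈ Metric.closedBall (ctr j) (ρ (ctr j)) := by
      rw [hcj]; exact Metric.ball_subset_closedBall hxball
    exact this
  set φ : ℕ → OpenPartialHomeomorph M (EuclideanSpace ℝ (Fin n)) := fun j =>
    chartAt (EuclideanSpace ℝ (Fin n)) (ctr j) with hφ
  have hEsource : ∀ j, Ej j ⊆ (φ j).source := fun j =>
    (hEsub j).trans inter_subset_left
  have hEbase : ∀ j, Ej j ⊆ (trivializationAt F V (ctr j)).baseSet := fun j =>
    (hEsub j).trans inter_subset_right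
  -- counting rational coordinates
  set cnt : ℕ → M → ℕ := fun j x =>
    (Finset.univ.filter (fun i : Fin n => ¬ Irrational (φ j x i))).card with hcnt
  have hcnt_le : ∀ j x, cnt j x ≤ n := by
    intro j x
    calc cnt j x ≤ Finset.univ.card := Finset.card_filter_le _ _
      _ = n := Finset.card_fin n
  set cs : M → Set ℕ := fun x => {m | ∃ j, x ∈ Ej j ∧ cnt j x = m} with hcs
  have hcs_ne : ∀ x, (cs x).Nonempty := by
    intro x
    obtain ⟨j, hj⟩ := hEcov x
    exact ⟨cnt j x, j, hj, rfl⟩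
  have hcs_bdd : ∀ x, ∀ m ∈ cs x, m ≤ n := by
    rintro x m ⟨j, _, rfl⟩
    exact hcnt_le j x
  set c : M → ℕ := fun x => sSup (cs x) with hc
  have hc_le : ∀ x, c x ≤ n := fun x => csSup_le (hcs_ne x) (hcs_bdd x)
  have hc_mem : ∀ x, c x ∈ cs x := fun x =>
    Nat.sSup_mem (hcs_ne x) ⟨n, fun m hm => hcs_bdd x m hm⟩
  have hc_ge : ∀ x j, x ∈ Ej j → cnt j x ≤ c x := fun x j hj =>
    le_csSup ⟨n, fun m hm => hcs_bdd x m hm⟩ ⟨j, hj, rfl⟩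
  -- the decomposition
  set Z : Fin (n+1) → Set M := fun k => {x | c x = (k : ℕ)} with hZ
  -- pieces
  obtain ⟨pe, hpe⟩ := exists_surjective_nat (ℕ × Finset (Fin n) × (Fin n → ℚ))
  set Rp : Fin (n+1) → ℕ → Set M := fun k p =>
    {x | x ∈ Ej (pe p).1 ∧ c x = (k : ℕ) ∧ (pe p).2.1.card = (k : ℕ) ∧
      (∀ i ∈ (pe p).2.1, φ (pe p).1 x i = ((pe p).2.2 i : ℝ)) ∧
      ∀ i, i ∉ (pe p).2.1 → Irrational (φ (pe p).1 x i)} with hRp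
  have hRZ : ∀ k p, Rp k p ⊆ Z k := fun k p x hx => hx.2.1
  have hRcov : ∀ k, Z k ⊆ ⋃ p, Rp k p := by
    intro k x hxZ
    obtain ⟨j, hjE, hjcnt⟩ := hc_mem x
    set S : Finset (Fin n) := Finset.univ.filter (fun i : Fin n => ¬ Irrational (φ j x i))
      with hS
    have hq : ∀ i : Fin n, ∃ qi : ℚ, i ∈ S → φ j x i = (qi : ℝ) := by
      intro i
      by_cases hiS : i ∈ S
      · have : ¬ Irrational (φ j x i) := (Finset.mem_filter.1 hiS).2
        rw [Irrational, not_not] at this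
        obtain ⟨qi, hqi⟩ := this
        exact ⟨qi, fun _ => hqi.symm⟩
      · exact ⟨0, fun h => absurd h hiS⟩
    choose qf hqf using hq
    obtain ⟨p, hp⟩ := hpe (j, S, qf)
    refine mem_iUnion.2 ⟨p, ?_⟩
    have hp1 : (pe p).1 = j := by rw [hp]
    have hp2 : (pe p).2.1 = S := by rw [hp]
    have hp3 : (pe p).2.2 = qf := by rw [hp]
    refine ⟨?_, hxZ, ?_, ?_, ?_⟩
    · rw [hp1]; exact hjE
    · rw [hp2]
      show (Finset.univ.filter (fun i : Fin n => ¬ Irrational (φ j x i))).card = (k : ℕ)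
      exact hjcnt.trans hxZ
    · rw [hp1, hp2, hp3]
      exact fun i hi => hqf i hi
    · rw [hp1, hp2]
      intro i hi
      have : ¬ ¬ Irrational (φ j x i) := fun hni =>
        hi (Finset.mem_filter.2 ⟨Finset.mem_univ i, hni⟩)
      exact not_not.1 this
  have hRcl : ∀ k p, closure (Rp k p) ∩ Z k ⊆ Rp k p := by
    rintro k p x ⟨hxcl, hxZ⟩
    rcases eq_empty_or_nonempty (Rp k p) with hemp | ⟨w, hw⟩
    · rw [hemp] at hxcl; simp at hxcl
    have hxE : x ∈ Ej (pe p).1 :=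
      ((hEclosed (pe p).1).closure_subset_iff.2 (fun y hy => hy.1)) hxcl
    have hxsource : x ∈ (φ (pe p).1).source := hEsource _ hxE
    have hcard : (pe p).2.1.card = (k : ℕ) := hw.2.2.1
    have hlevel : ∀ i ∈ (pe p).2.1, φ (pe p).1 x i = ((pe p).2.2 i : ℝ) := by
      intro i hi
      have hcont : ContinuousAt (fun x' => φ (pe p).1 x' i) x :=
        (EuclideanSpace.proj i).continuous.continuousAt.comp
          ((φ (pe p).1).continuousAt hxsource)
      have h1 : (fun x' => φ (pe p).1 x' i) x ∈
          closure ((fun x' => φ (pe p).1 x' i) '' Rp k p) :=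
        mem_closure_image hcont hxcl
      have h2 : ((fun x' => φ (pe p).1 x' i) '' Rp k p) ⊆ {((pe p).2.2 i : ℝ)} := by
        rintro _ ⟨z, hz, rfl⟩
        exact hz.2.2.2.1 i hi
      have := (closure_minimal h2 isClosed_singleton) h1
      exact this
    refine ⟨hxE, hxZ, hcard, hlevel, fun i hi => ?_⟩
    by_contra hni
    -- then `cnt` at `x` in chart `(pe p).1` is at least `k + 1`
    have hsub : insert i (pe p).2.1 ⊆
        Finset.univ.filter (fun i' : Fin n => ¬ Irrational (φ (pe p).1 x i')) := by
      intro i' hi'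
      rcases Finset.mem_insert.1 hi' with rfl | hi'S
      · exact Finset.mem_filter.2 ⟨Finset.mem_univ _, hni⟩
      · refine Finset.mem_filter.2 ⟨Finset.mem_univ _, ?_⟩
        rw [hlevel i' hi'S]
        rw [Irrational, not_not]
        exact ⟨(pe p).2.2 i', rfl⟩
    have hcnt_ge : (k : ℕ) + 1 ≤ cnt (pe p).1 x := by
      have h1 : (insert i (pe p).2.1).card = (k : ℕ) + 1 := by
        rw [Finset.card_insert_of_notMem hi, hcard]
      rw [← h1]
      exact Finset.card_le_card hsub
    have := hc_ge x (pe p).1 hxE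
    rw [hxZ] at this
    omega
  have hRbasis : ∀ k p, HasRelClopenBasis (Rp k p) := by
    intro k p
    refine hasRelClopenBasis_of_exact_levels (φ (pe p).1)
      (fun x hx => hEsource _ hx.1) (pe p).2.1 (pe p).2.2
      (fun x hx i hi => hx.2.2.2.1 i hi) (fun x hx i hi => hx.2.2.2.2 i hi)
  -- expand each `Z k` into a disjoint family of opens inside trivializing sets
  have hexp : ∀ k : Fin (n+1), ∃ W : ℕ → Set M, (∀ t, IsOpen (W t)) ∧
      Pairwise (Disjoint on W) ∧ Z k ⊆ ⋃ t, W t ∧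
      ∀ t, ∃ z, W t ⊆ (trivializationAt F V z).baseSet := by
    intro k
    exact exists_disjoint_open_expansion (hRZ k) (hRcov k) (hRcl k) (hRbasis k)
      (fun z => (trivializationAt F V z).baseSet)
      (fun z => (trivializationAt F V z).open_baseSet)
      (fun z => FiberBundle.mem_baseSet_trivializationAt' z)
  choose W hWo hWdisj hWcov hWbase using hexp
  refine ⟨fun k => ⋃ t, W k t, fun k => isOpen_iUnion (hWo k), ?_, ?_⟩
  · rw [eq_univ_iff_forall]
    intro x
    have hcx : c x < n + 1 := Nat.lt_succ_of_le (hc_le x)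
    have hxZ : x ∈ Z ⟨c x, hcx⟩ := rfl
    exact mem_iUnion.2 ⟨⟨c x, hcx⟩, hWcov _ hxZ⟩
  · intro k
    choose zpt hzpt using hWbase k
    set e : ℕ → Trivialization F (Bundle.TotalSpace.proj (F := F) (E := V)) := fun t =>
      trivializationAt F V (zpt t) with he
    set bF : Module.Basis (Fin r) ℝ F := Module.finBasisOfFinrankEq ℝ F hr with hbF
    set s : Fin r → ∀ x : M, V x := fun i x =>
      if h : ∃ t, x ∈ W k t then (e h.choose).symm x (bF i) else 0 with hs
    have hsval : ∀ t, ∀ x ∈ W k t, ∀ i, s i x = (e t).symm x (bF i) := by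
      intro t x hxt i
      have hex : ∃ t', x ∈ W k t' := ⟨t, hxt⟩
      have ht' : hex.choose = t := by
        by_contra hne
        exact (hWdisj k hne).le_bot ⟨hex.choose_spec, hxt⟩
      rw [hs]
      simp only [dif_pos hex]
      rw [ht']
    have hsbase : ∀ t, W k t ⊆ (e t).baseSet := fun t => hzpt t
    refine ⟨s, ?_, ?_⟩
    · intro i x hx
      obtain ⟨t, hxt⟩ := mem_iUnion.1 hx
      -- the section agrees with a smooth map on the open set `W k t`
      have hsmooth : ContMDiffOn (𝓡 n) ((𝓡 n).prod 𝓘(ℝ, F)) (⊤ : ℕ∞)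
          (fun x' => (e t).toOpenPartialHomeomorph.symm (x', bF i)) ((e t).baseSet) := by
        have h1 := Trivialization.contMDiffOn_symm (IB := 𝓡 n) (n := ((⊤ : ℕ∞) : WithTop ℕ∞)) (e t)
        have h2 : ContMDiff (𝓡 n) ((𝓡 n).prod 𝓘(ℝ, F)) (⊤ : ℕ∞)
            (fun x' : M => (x', bF i)) := contMDiff_id.prodMk contMDiff_const
        refine h1.comp h2.contMDiffOn ?_
        intro x' hx'
        exact (e t).mem_target.mpr hx'
      have hsmooth' : ContMDiffOn (𝓡 n) ((𝓡 n).prod 𝓘(ℝ, F)) (⊤ : ℕ∞)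
          (fun x' => TotalSpace.mk' F x' (s i x')) (W k t) := by
        refine ContMDiffOn.congr (hsmooth.mono (hsbase t)) ?_
        intro x' hx'
        rw [hsval t x' hx' i]
        exact Trivialization.mk_symm (e t) (hsbase t hx') (bF i)
      exact ((hsmooth'.contMDiffAt ((hWo k t).mem_nhds hxt)).contMDiffWithinAt)
    · intro x hx
      obtain ⟨t, hxt⟩ := mem_iUnion.1 hx
      have hxbase : x ∈ (e t).baseSet := hsbase t hxt
      set equiv := (e t).continuousLinearEquivAt ℝ x hxbase with hequiv
      set bx : Module.Basis (Fin r) ℝ (V x) := bF.map equiv.symm.toLinearEquiv with hbx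
      have hsx : ∀ i, s i x = bx i := by
        intro i
        rw [hsval t x hxt i, hbx, Module.Basis.map_apply]
        have h1 : equiv.symm (bF i) = (e t).symmL ℝ x (bF i) :=
          congrFun (Trivialization.symm_continuousLinearEquivAt_eq (e t) hxbase) (bF i)
        have h2 : (e t).symmL ℝ x (bF i) = (e t).symm x (bF i) :=
          (e t).symmL_apply (R := ℝ) hxbase (bF i)
        rw [ContinuousLinearEquiv.coe_toLinearEquiv]
        exact (h1.trans h2).symm
      have hfun : (fun i => s i x) = ⇑bx := funext hsx
      constructor
      · rw [hfun]; exact bx.linearIndependent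
      · rw [hfun]; exact bx.span_eq

end
end

section
/- (Euler homogeneity implies linearity.) Let E and F be normed vector spaces over ℝ and let f : E → F be a map that is differentiable at 0 and satisfies f(λ·x) = λ·f(x) for all λ ∈ ℝ and all x ∈ E. Then f coincides with the continuous linear map fderiv ℝ f 0; in particular f is additive, i.e. f(x + y) = f(x) + f(y) for all x, y ∈ E. -/
/-- **Euler homogeneity implies linearity.** A map between real normed spaces which
is differentiable at `0` and positively and negatively homogeneous of degree one
(`f (c • x) = c • f x` for all real `c`) coincides with its Fréchet derivative at
`0`; in particular it is additive. -/
theorem homogeneous_of_differentiableAt_eq_fderiv_and_additive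
    {E F : Type*} [NormedAddCommGroup E] [NormedSpace ℝ E]
    [NormedAddCommGroup F] [NormedSpace ℝ F]
    (f : E → F) (hf : DifferentiableAt ℝ f 0)
    (hhom : ∀ (c : ℝ) (x : E), f (c • x) = c • f x) :
    (∀ x, f x = fderiv ℝ f 0 x) ∧ ∀ x y, f (x + y) = f x + f y := by
  have key : ∀ x, f x = fderiv ℝ f 0 x := by
    intro x
    have hline : HasDerivAt (fun t : ℝ => t • x) x 0 := by
      simpa using (hasDerivAt_id (0 : ℝ)).smul_const x
    have hline' : HasDerivAt (fun t : ℝ => t • x) x 0 := hline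
    have h1 : HasDerivAt (fun t : ℝ => f (t • x)) (fderiv ℝ f 0 x) 0 := by
      have hF : HasFDerivAt f (fderiv ℝ f 0) ((0:ℝ) • x) := by simpa using hf.hasFDerivAt
      have := hF.comp_hasDerivAt 0 hline
      exact this
    have h2 : HasDerivAt (fun t : ℝ => f (t • x)) (f x) 0 := by
      have : HasDerivAt (fun t : ℝ => t • f x) (f x) 0 := by
        simpa using (hasDerivAt_id (0 : ℝ)).smul_const (f x)
      exact this.congr_of_eventuallyEq (Filter.Eventually.of_forall fun t => hhom t x)
    exact h2.unique h1
  refine ⟨key, fun x y => ?_⟩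
  rw [key (x + y), key x, key y, map_add]
end

section
/- Let G, E, F be normed vector spaces over ℝ and let f : G × E → F be an infinitely differentiable (C^∞) map satisfying f(x, λ·v) = λ·f(x, v) for all λ ∈ ℝ, x ∈ G and v ∈ E. Then there exists a C^∞ map A : G → (E →L[ℝ] F) into the space of continuous linear maps from E to F such that f(x, v) = A(x)(v) for all x ∈ G and v ∈ E. (A smooth map that is homogeneous of degree one in the fiber variable is fiberwise linear with smoothly varying coefficients.) -/
/-- A smooth map `f : G × E → F` which is homogeneous of degree one in the second
(fiber) variable is fiberwise linear with smoothly varying coefficients: there is a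
smooth map `A : G → (E →L[ℝ] F)` with `f (x, v) = A x v`. -/
theorem smooth_fiberwise_homogeneous_is_fiberwise_linear
    {G E F : Type*} [NormedAddCommGroup G] [NormedSpace ℝ G]
    [NormedAddCommGroup E] [NormedSpace ℝ E]
    [NormedAddCommGroup F] [NormedSpace ℝ F]
    (f : G × E → F) (hf : ContDiff ℝ (⊤ : ℕ∞) f)
    (hhom : ∀ (c : ℝ) (x : G) (v : E), f (x, c • v) = c • f (x, v)) :
    ∃ A : G → (E →L[ℝ] F), ContDiff ℝ (⊤ : ℕ∞) A ∧ ∀ (x : G) (v : E), f (x, v) = A x v := by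
  refine ⟨fun x => (fderiv ℝ f (x, 0)).comp (ContinuousLinearMap.inr ℝ G E), ?_, ?_⟩
  · have h1 : ContDiff ℝ (⊤ : ℕ∞) (fun x : G => fderiv ℝ f (x, 0)) :=
      (hf.fderiv_right (m := (⊤ : ℕ∞)) (by simp)).comp (contDiff_id.prodMk contDiff_const)
    exact (((ContinuousLinearMap.compL ℝ E (G × E) F).flip
      (ContinuousLinearMap.inr ℝ G E)).contDiff).comp h1
  · intro x v
    have hc : HasDerivAt (fun t : ℝ => ((x, t • v) : G × E)) ((0 : G), v) 0 := by
      have := ((hasDerivAt_id (0 : ℝ)).smul_const v)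
      simpa using (hasDerivAt_const (0 : ℝ) x).prodMk this
    have hg : HasDerivAt (fun t : ℝ => f (x, t • v)) (fderiv ℝ f (x, 0) ((0 : G), v)) 0 := by
      have hd : HasFDerivAt f (fderiv ℝ f (x, 0)) (x, (0 : ℝ) • v) := by
        simpa using (hf.differentiable (by simp) (x, 0)).hasFDerivAt
      simpa [Function.comp_def] using hd.comp_hasDerivAt 0 hc
    have hg' : HasDerivAt (fun t : ℝ => f (x, t • v)) (f (x, v)) 0 := by
      have : (fun t : ℝ => f (x, t • v)) = fun t : ℝ => t • f (x, v) := by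
        funext t; exact hhom t x v
      rw [this]
      simpa using (hasDerivAt_id (0 : ℝ)).smul_const (f (x, v))
    have := hg.unique hg'
    simpa [ContinuousLinearMap.comp_apply] using this.symm
end

section
/- For every finite nonempty subset a ⊆ ι, the set W_a is open in X. -/
open Set Function

noncomputable section

variable {ι X : Type*} [TopologicalSpace X]

/-- For a partition of unity `ρ` on `X` and a finite subset `a ⊆ ι`, the set
`W_a = {x ∈ X : ρ_α(x) < min_{β ∈ a} ρ_β(x) for every α ∉ a}`; since `a` is finite,
the condition `ρ_α(x) < min_{β ∈ a} ρ_β(x)` is spelled `∀ β ∈ a, ρ_α(x) < ρ_β(x)`. -/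
def partitionW (ρ : PartitionOfUnity ι X Set.univ) (a : Finset ι) : Set X :=
  {x | ∀ α ∉ a, ∀ β ∈ a, ρ α x < ρ β x}

/-- For every finite nonempty subset `a ⊆ ι`, the set `W_a` is open. -/
theorem partitionW_isOpen (ρ : PartitionOfUnity ι X Set.univ) (a : Finset ι)
    (ha : a.Nonempty) : IsOpen (partitionW ρ a) := by
  by_cases h : ∀ α, α ∈ a
  · have : partitionW ρ a = univ := by
      ext x
      simp only [partitionW, mem_setOf_eq, mem_univ, iff_true]
      intro α hα
      exact absurd (h α) hα
    rw [this]; exact isOpen_univ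
  · push_neg at h
    obtain ⟨α₀, hα₀⟩ := h
    classical
    rw [isOpen_iff_mem_nhds]
    intro x hx
    obtain ⟨U, hU, hUfin⟩ := ρ.locallyFinite x
    set A : Set X := ⋂ β ∈ a, {y | 0 < ρ β y} with hA
    set B : Set X := ⋂ α ∈ hUfin.toFinset \ a, ⋂ β ∈ a, {y | ρ α y < ρ β y} with hB
    have hAopen : IsOpen A :=
      isOpen_biInter_finset fun β _ => isOpen_lt continuous_const (ρ β).continuous
    have hBopen : IsOpen B :=
      isOpen_biInter_finset fun α _ =>
        isOpen_biInter_finset fun β _ => isOpen_lt (ρ α).continuous (ρ β).continuous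
    have hxA : x ∈ A := by
      simp only [hA, mem_iInter, mem_setOf_eq]
      intro β hβ
      exact lt_of_le_of_lt (ρ.nonneg α₀ x) (hx α₀ hα₀ β hβ)
    have hxB : x ∈ B := by
      simp only [hB, mem_iInter, mem_setOf_eq, Finset.mem_sdiff]
      intro α hα β hβ
      exact hx α hα.2 β hβ
    have hsub : U ∩ (A ∩ B) ⊆ partitionW ρ a := by
      rintro y ⟨hyU, hyA, hyB⟩ α hα β hβ
      by_cases hαs : α ∈ hUfin.toFinset
      · simp only [hB, mem_iInter, mem_setOf_eq, Finset.mem_sdiff] at hyB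
        exact hyB α ⟨hαs, hα⟩ β hβ
      · have hzero : ρ α y = 0 := by
          by_contra hne
          exact hαs (hUfin.mem_toFinset.mpr ⟨y, mem_inter hne hyU⟩)
        rw [hzero]
        simp only [hA, mem_iInter, mem_setOf_eq] at hyA
        exact hyA β hβ
    exact Filter.mem_of_superset
      (Filter.inter_mem hU ((hAopen.inter hBopen).mem_nhds ⟨hxA, hxB⟩)) hsub
end
end

section
/- If a, a' ⊆ ι are finite nonempty subsets with the same cardinality and a ≠ a', then W_a ∩ W_{a'} = ∅. -/
open Set Function

noncomputable section

variable {ι X : Type*} [TopologicalSpace X]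

/-- The sets `W_a` and `W_{a'}` associated to distinct finite nonempty subsets of the
same cardinality are disjoint. -/
theorem partitionW_disjoint (ρ : PartitionOfUnity ι X Set.univ) (a a' : Finset ι)
    (ha : a.Nonempty) (ha' : a'.Nonempty) (hcard : a.card = a'.card) (hne : a ≠ a') :
    partitionW ρ a ∩ partitionW ρ a' = ∅ := by
  ext x
  simp only [Set.mem_inter_iff, Set.mem_empty_iff_false, iff_false, not_and]
  intro hx hx'
  have h1 : ¬ a ⊆ a' := fun h => hne (Finset.eq_of_subset_of_card_le h hcard.ge)
  have h2 : ¬ a' ⊆ a := fun h => hne (Finset.eq_of_subset_of_card_le h hcard.le).symm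
  obtain ⟨α, hαa, hαa'⟩ := Finset.not_subset.mp h1
  obtain ⟨β, hβa', hβa⟩ := Finset.not_subset.mp h2
  exact absurd (hx β hβa α hαa) (not_lt.mpr (hx' α hαa' β hβa').le)
end
end

section
/- Let n ∈ ℕ, let (U_α)_{α∈ι} be an open cover of X, and suppose the partition of unity (ρ_α)_{α∈ι} is subordinate to (U_α) (tsupport(ρ_α) ⊆ U_α for every α) and that every x ∈ X lies in at most n+1 of the sets {ρ_α > 0}. Then there exist open sets V_0, …, V_n covering X such that each V_k is the union of a family of pairwise disjoint open sets, each of which is contained in U_α for some α ∈ ι. -/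
open Set Function

noncomputable section

/-- If a partition of unity on `X` is subordinate to an open cover `(U_α)` and at every
point at most `n + 1` of its functions are positive, then `X` is covered by `n + 1`
open sets `V_0, …, V_n`, each of which is a union of a family of pairwise disjoint
open sets, each contained in some `U_α`. -/
theorem exists_cover_of_partitionOfUnity {ι X : Type*} [TopologicalSpace X]
    (ρ : PartitionOfUnity ι X Set.univ) (n : ℕ) (U : ι → Set X)
    (hUo : ∀ i, IsOpen (U i)) (hUc : (⋃ i, U i) = Set.univ)
    (hsub : ∀ i, tsupport ⇑(ρ i) ⊆ U i)
    (hn : ∀ x : X, {α | 0 < ρ α x}.Finite ∧ {α | 0 < ρ α x}.ncard ≤ n + 1) :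
    ∃ V : Fin (n + 1) → Set X,
      (∀ k, IsOpen (V k)) ∧ (⋃ k, V k) = Set.univ ∧
      ∀ k, ∃ 𝒲 : Set (Set X),
        (∀ w ∈ 𝒲, IsOpen w) ∧ 𝒲.PairwiseDisjoint id ∧
        (∀ w ∈ 𝒲, ∃ i, w ⊆ U i) ∧ V k = ⋃₀ 𝒲 := by
  classical
  -- the basic open pieces
  set W : Set ι → Set X :=
    fun S => {x | ∀ α ∈ S, 0 < ρ α x ∧ ∀ β, β ∉ S → ρ β x < ρ α x} with hWdef
  -- openness of `W S` for finite `S`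
  have hWopen : ∀ S : Set ι, S.Finite → IsOpen (W S) := by
    intro S hS
    rw [isOpen_iff_mem_nhds]
    intro x hx
    obtain ⟨N, hN, hNfin⟩ := ρ.locallyFinite x
    set T := {i | (support (ρ i) ∩ N).Nonempty} with hTdef
    have key : N ∩ ⋂ α ∈ S, ({y | 0 < ρ α y} ∩ ⋂ β ∈ T \ S, {y | ρ β y < ρ α y}) ⊆ W S := by
      rintro y ⟨hyN, hy⟩
      simp only [mem_iInter, mem_inter_iff, mem_setOf_eq] at hy
      intro α hα
      obtain ⟨hpos, hlt⟩ := hy α hα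
      refine ⟨hpos, fun β hβ => ?_⟩
      by_cases hβT : β ∈ T
      · exact hlt β ⟨hβT, hβ⟩
      · have hz : ρ β y = 0 := by
          by_contra h
          exact hβT ⟨y, h, hyN⟩
        rw [hz]; exact hpos
    refine Filter.mem_of_superset (Filter.inter_mem hN ?_) key
    refine (Filter.biInter_mem hS).2 fun α hα => ?_
    obtain ⟨hpos, hlt⟩ := hx α hα
    refine Filter.inter_mem ?_ ?_
    · exact (isOpen_lt continuous_const (ρ α).continuous).mem_nhds hpos
    · have hTS : (T \ S).Finite := hNfin.subset diff_subset
      refine (Filter.biInter_mem hTS).2 fun β hβ => ?_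
      exact (isOpen_lt (ρ β).continuous (ρ α).continuous).mem_nhds (hlt β hβ.2)
  -- the families
  set 𝒲 : Fin (n + 1) → Set (Set X) :=
    fun k => {w | ∃ S : Set ι, S.Finite ∧ S.ncard = (k : ℕ) + 1 ∧ w = W S} with h𝒲def
  refine ⟨fun k => ⋃₀ 𝒲 k, ?_, ?_, ?_⟩
  · intro k
    refine isOpen_sUnion fun w hw => ?_
    obtain ⟨S, hSfin, _, rfl⟩ := hw
    exact hWopen S hSfin
  · -- covering
    rw [eq_univ_iff_forall]
    intro x
    set P := {α | 0 < ρ α x} with hPdef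
    obtain ⟨hPfin, hPcard⟩ := hn x
    have hPne : P.Nonempty := by
      obtain ⟨i, hi⟩ := ρ.exists_pos (mem_univ x)
      exact ⟨i, hi⟩
    have hPpos : 1 ≤ P.ncard := (Set.ncard_pos hPfin).mpr hPne
    have hxW : x ∈ W P := by
      intro α hα
      refine ⟨hα, fun β hβ => ?_⟩
      have : ρ β x = 0 := le_antisymm (not_lt.mp hβ) (ρ.nonneg β x)
      rw [this]; exact hα
    have hPcard' : P.ncard ≤ n + 1 := hPcard
    refine mem_iUnion.2 ⟨⟨P.ncard - 1, by omega⟩, ?_⟩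
    exact ⟨W P, ⟨P, hPfin, show P.ncard = P.ncard - 1 + 1 by omega, rfl⟩, hxW⟩
  · intro k
    refine ⟨𝒲 k, ?_, ?_, ?_, rfl⟩
    · rintro w ⟨S, hSfin, _, rfl⟩
      exact hWopen S hSfin
    · -- pairwise disjoint
      rintro w ⟨S, hSfin, hScard, rfl⟩ w' ⟨S', hS'fin, hS'card, rfl⟩ hne
      have hSS' : S ≠ S' := fun h => hne (by rw [h])
      show Disjoint (W S) (W S')
      rw [Set.disjoint_left]
      intro y hyS hyS'
      -- find α ∈ S \ S' and β ∈ S' \ S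
      have hdiff : (S \ S').Nonempty := by
        rw [Set.diff_nonempty]
        intro hsub'
        exact hSS' (Set.eq_of_subset_of_ncard_le hsub' (by omega) hS'fin)
      have hdiff' : (S' \ S).Nonempty := by
        rw [Set.diff_nonempty]
        intro hsub'
        exact hSS' (Set.eq_of_subset_of_ncard_le hsub' (by omega) hSfin).symm
      obtain ⟨α, hαS, hαS'⟩ := hdiff
      obtain ⟨β, hβS', hβS⟩ := hdiff'
      have h1 : ρ β y < ρ α y := (hyS α hαS).2 β hβS
      have h2 : ρ α y < ρ β y := (hyS' β hβS').2 α hαS'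
      exact absurd (h1.trans h2) (lt_irrefl _)
    · rintro w ⟨S, hSfin, hScard, rfl⟩
      have hSne : S.Nonempty := by
        rw [← Set.ncard_pos hSfin]; omega
      obtain ⟨α, hα⟩ := hSne
      refine ⟨α, fun y hy => ?_⟩
      have hpos : 0 < ρ α y := (hy α hα).1
      exact hsub α (subset_tsupport _ (by simpa [mem_support] using hpos.ne'))
end
end
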